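/- arXiv:1408.3369 — 7 statements merged into one kernel-verified Lean document; each statement's English description precedes it below -/
import Mathlib

section
/- Let V be a real inner product space, W a finite group acting on V by linear isometries, and z, x ∈ V. Assume that for every y in the orbit W • x with y ≠ x there exist h ∈ W and a nonzero vector v ∈ V such that h acts on V as the orthogonal reflection in the hyperplane v^⊥ (i.e. h • u = u − 2(⟪u, v⟫/⟪v, v⟫)·v for all u ∈ V) and ⟪z, v⟫ · ⟪y, v⟫ > 0. Then for every y ∈ W • x with y ≠ x one has ‖z − y‖ < ‖z − x‖, or equivalently ⟪z, y⟫ > ⟪z, x⟫; in particular, the function W → ℝ, w ↦ ‖z − w • x‖, attains its maximum exactly at those w ∈ W with w • x = x. -/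
/-!
Reflecting a point `y ≠ x` of the orbit in the hyperplane separating it from `z` yields another
point of the orbit strictly farther from `z`. Hence on the finite orbit the distance to `z` can
only be maximal at `x`, and since all orbit points have the same norm, being farther from `z`
means having smaller inner product with `z`.
-/

open scoped InnerProductSpace

theorem Set.Finite.lt_of_forall_ne_exists_lt {α β : Type*} [LinearOrder β] {s : Set α}
    (hs : s.Finite) (f : α → β) {a : α} (ha : a ∈ s)
    (h : ∀ b ∈ s, b ≠ a → ∃ c ∈ s, f b < f c) :
    ∀ b ∈ s, b ≠ a → f b < f a := by
  have not_max : ∀ b ∈ s, b ≠ a → ¬ ∀ c ∈ s, f c ≤ f b := fun b hb hba hmax => by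
    obtain ⟨c, hc, hbc⟩ := h b hb hba
    exact (hmax c hc).not_gt hbc
  obtain ⟨m, hm, hmax⟩ := Set.exists_max_image s f hs ⟨a, ha⟩
  have hma : m = a := by_contra fun hma => not_max m hm hma hmax
  subst hma
  intro b hb hbm
  by_contra! hmb
  exact not_max b hb hbm fun c hc => (hmax c hc).trans hmb

section Reflection

variable {V : Type*} [NormedAddCommGroup V] [InnerProductSpace ℝ V]

theorem norm_sub_lt_norm_sub_iff_inner_lt {z x y : V} (hxy : ‖y‖ = ‖x‖) :
    ‖z - y‖ < ‖z - x‖ ↔ ⟪z, x⟫_ℝ < ⟪z, y⟫_ℝ := by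
  rw [← sq_lt_sq₀ (norm_nonneg _) (norm_nonneg _), norm_sub_sq_real, norm_sub_sq_real, hxy]
  constructor <;> intro h <;> linarith

theorem norm_sub_lt_norm_sub_reflection {z y v : V} (hv : v ≠ 0)
    (hside : 0 < ⟪z, v⟫_ℝ * ⟪y, v⟫_ℝ) :
    ‖z - y‖ < ‖z - (y - (2 * ⟪y, v⟫_ℝ / ⟪v, v⟫_ℝ) • v)‖ := by
  have hvv : 0 < ⟪v, v⟫_ℝ := real_inner_self_pos.mpr hv
  set c := 2 * ⟪y, v⟫_ℝ / ⟪v, v⟫_ℝ with hc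
  -- `c` is chosen so that the `⟪y, v⟫` and `‖v‖ ^ 2` contributions cancel
  have hgain : ‖z - (y - c • v)‖ ^ 2 = ‖z - y‖ ^ 2 + 2 * c * ⟪z, v⟫_ℝ := by
    rw [sub_sub_eq_add_sub, add_sub_right_comm, ← real_inner_self_eq_norm_sq,
      ← real_inner_self_eq_norm_sq]
    simp only [inner_add_left, inner_add_right, inner_sub_left, inner_sub_right,
      real_inner_smul_left, real_inner_smul_right, real_inner_comm z v, real_inner_comm y v]
    rw [hc]
    field_simp
    ring
  have hcz : 0 < c * ⟪z, v⟫_ℝ := by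
    rw [hc, div_mul_eq_mul_div, mul_assoc, mul_comm ⟪y, v⟫_ℝ]
    positivity
  rw [← sq_lt_sq₀ (norm_nonneg _) (norm_nonneg _), hgain]
  linarith

end Reflection

/-- Step 1 of the proof of Lemma 3.1 of the paper. -/
theorem stmt_1
    {V : Type*} [NormedAddCommGroup V] [InnerProductSpace ℝ V]
    {W : Type*} [Group W] [Finite W] (ρ : W →* (V ≃ₗᵢ[ℝ] V))
    (z x : V)
    (hsep : ∀ y : V, (∃ w : W, ρ w x = y) → y ≠ x →
      ∃ (h : W) (v : V), v ≠ 0 ∧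
        (∀ u : V, ρ h u = u - (2 * ⟪u, v⟫_ℝ / ⟪v, v⟫_ℝ) • v) ∧
        ⟪z, v⟫_ℝ * ⟪y, v⟫_ℝ > 0) :
    (∀ y : V, (∃ w : W, ρ w x = y) → y ≠ x →
      ‖z - y‖ < ‖z - x‖ ∧ ⟪z, x⟫_ℝ < ⟪z, y⟫_ℝ) ∧
    (∀ w : W, (∀ w' : W, ‖z - ρ w' x‖ ≤ ‖z - ρ w x‖) ↔ ρ w x = x) := by
  have hx : x ∈ Set.range fun w => ρ w x := ⟨1, by simp⟩
  have farthest : ∀ y ∈ Set.range fun w => ρ w x, y ≠ x → ‖z - y‖ < ‖z - x‖ := by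
    refine (Set.finite_range _).lt_of_forall_ne_exists_lt (fun y => ‖z - y‖) hx ?_
    rintro _ ⟨w, rfl⟩ hne
    obtain ⟨h, v, hv, hrefl, hside⟩ := hsep _ ⟨w, rfl⟩ hne
    refine ⟨ρ (h * w) x, ⟨h * w, rfl⟩, ?_⟩
    rw [map_mul, LinearIsometryEquiv.coe_mul, Function.comp_apply, hrefl]
    exact norm_sub_lt_norm_sub_reflection hv hside
  refine ⟨?_, fun w => ⟨fun hmax => ?_, fun hfix w' => ?_⟩⟩
  · rintro _ ⟨w, rfl⟩ hne
    have hlt := farthest _ ⟨w, rfl⟩ hne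
    exact ⟨hlt, (norm_sub_lt_norm_sub_iff_inner_lt ((ρ w).norm_map x)).mp hlt⟩
  · by_contra hne
    exact (hmax 1).not_gt (by simpa using farthest _ ⟨w, rfl⟩ hne)
  · rw [hfix]
    by_cases h : ρ w' x = x
    · rw [h]
    · exact (farthest _ ⟨w', rfl⟩ h).le
end

section
/- Let R be a commutative ring and (Λ, ≤) a partially ordered set such that for every λ ∈ Λ the set {μ ∈ Λ : μ ≤ λ} is finite. Let M = Λ →₀ R be the free R-module with basis (e_λ)_{λ ∈ Λ}, and let f : M → M be an R-linear map such that for every λ ∈ Λ the element f(e_λ) − e_λ is supported on {μ ∈ Λ : μ < λ}. Then f is bijective. -/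
/-!
Write `f = 1 + g`, where `g` maps each `e_λ` into the span of the `e_μ` with `μ < λ`.
For injectivity, look at a maximal index `λ` in the support of a nonzero `x`: `g x` has no
`e_λ`-coefficient, so `(f x)_λ = x_λ ≠ 0`. For surjectivity, finiteness of the lower sets makes
`<` well-founded, and `e_λ = f e_λ - g e_λ` lies in the range of `f` by well-founded induction.
-/

theorem wellFoundedLT_of_finite_Iic {α : Type*} [PartialOrder α]
    (h : ∀ a : α, (Set.Iic a).Finite) : WellFoundedLT α where
  wf := Subrelation.wf
    (fun {_ _} hab => Finset.card_lt_card <|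
      Set.Finite.toFinset_ssubset_toFinset.mpr (Set.Iic_ssubset_Iic.mpr hab))
    (measure fun a => (h a).toFinset.card).wf

namespace Finsupp

variable {R : Type*} [Ring R] {Λ : Type*} [PartialOrder Λ]

def IsUnitriangular (f : (Λ →₀ R) →ₗ[R] (Λ →₀ R)) : Prop :=
  ∀ lam : Λ, ∀ mu ∈ (f (single lam 1) - single lam 1).support, mu < lam

namespace IsUnitriangular

variable {f : (Λ →₀ R) →ₗ[R] (Λ →₀ R)} (hf : IsUnitriangular f)
include hf

theorem apply_single_one_apply_of_not_lt {lam mu : Λ} (h : ¬ mu < lam) :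
    f (single lam 1) mu = single lam 1 mu := by
  by_contra hne
  exact h (hf lam mu (mem_support_iff.mpr (sub_ne_zero.mpr hne)))

theorem apply_apply_of_forall_not_lt {x : Λ →₀ R} {lam : Λ}
    (hmax : ∀ mu ∈ x.support, ¬ lam < mu) : f x lam = x lam := by
  conv_lhs => rw [← x.sum_single, map_finsuppSum]
  conv_rhs => rw [← x.sum_single]
  simp only [Finsupp.sum, finsetSum_apply]
  refine Finset.sum_congr rfl fun mu hmu => ?_
  rw [← smul_single_one, map_smul, smul_apply, smul_apply,
    hf.apply_single_one_apply_of_not_lt (hmax mu hmu)]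

theorem injective : Function.Injective f := by
  refine (injective_iff_map_eq_zero f).mpr fun x hx => ?_
  by_contra hne
  obtain ⟨lam, hlam⟩ := x.support.exists_maximal (support_nonempty_iff.mpr hne)
  have hfix : f x lam = x lam :=
    hf.apply_apply_of_forall_not_lt fun mu hmu hlt => hlt.not_ge (hlam.2 hmu hlt.le)
  exact mem_support_iff.mp hlam.1 (by rw [← hfix, hx, zero_apply])

theorem single_one_mem_range [WellFoundedLT Λ] (lam : Λ) :
    single lam (1 : R) ∈ LinearMap.range f := by
  induction lam using WellFoundedLT.induction with
  | _ lam ih =>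
    set g := f (single lam 1) - single lam 1
    have hg : g ∈ LinearMap.range f := by
      rw [← g.sum_single]
      refine Submodule.finsuppSum_mem _ _ _ _ fun mu hmu => ?_
      rw [← smul_single_one]
      exact Submodule.smul_mem _ _ (ih mu (hf lam mu (mem_support_iff.mpr hmu)))
    rw [← sub_sub_cancel (f (single lam 1)) (single lam 1)]
    exact Submodule.sub_mem _ (LinearMap.mem_range_self f _) hg

theorem surjective [WellFoundedLT Λ] : Function.Surjective f := by
  rw [← LinearMap.range_eq_top, eq_top_iff,
    ← (Finsupp.basisSingleOne : Module.Basis Λ R (Λ →₀ R)).span_eq, Submodule.span_le]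
  rintro _ ⟨lam, rfl⟩
  simpa using hf.single_one_mem_range lam

end IsUnitriangular

end Finsupp

/-- an `R`-linear endomorphism of a free module with partially ordered basis
(with finite lower sets) which is unipotent lower-triangular with respect to the basis is
bijective. -/
theorem stmt_6
    {R : Type*} [CommRing R] {Λ : Type*} [PartialOrder Λ]
    (hfin : ∀ lam : Λ, {mu : Λ | mu ≤ lam}.Finite)
    (f : (Λ →₀ R) →ₗ[R] (Λ →₀ R))
    (hf : ∀ lam : Λ, ∀ mu ∈ (f (Finsupp.single lam 1) - Finsupp.single lam 1).support,
      mu < lam) :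
    Function.Bijective f :=
  have : WellFoundedLT Λ := wellFoundedLT_of_finite_Iic hfin
  have hf : Finsupp.IsUnitriangular f := hf
  ⟨hf.injective, hf.surjective⟩
end

section
/- Let R be a discrete valuation ring with residue field k. Let (C_i)_{i ∈ ℤ} be a complex of finitely generated free R-modules with differentials d_i : C_{i+1} → C_i satisfying d_{i−1} ∘ d_i = 0, and suppose there exists N such that C_i = 0 for all i > N. If the reduced complex (C_i ⊗_R k, d_i ⊗ id_k) is exact, i.e. for every i the kernel of C_i ⊗_R k → C_{i−1} ⊗_R k equals the image of C_{i+1} ⊗_R k → C_i ⊗_R k, then the complex (C_i, d_i) is exact, i.e. ker d_{i−1} = im d_i for every i. -/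
/-!
A cycle `x` of `C` stays a cycle in `C ⊗ k`, hence is a boundary there; lifting gives
`x = d y + ϖ • w` for a uniformizer `ϖ`, and `w` is again a cycle because `C` is torsion-free.
Thus `ker d ≤ range d ⊔ 𝔪 • ker d`, and Nakayama's lemma (`ker d` is finitely generated since
`R` is noetherian) gives `ker d = range d`.
-/

open TensorProduct

section QuotientReduction

variable {R M N P : Type*} [CommRing R] [AddCommGroup M] [Module R M] [AddCommGroup N] [Module R N]
  [AddCommGroup P] [Module R P]

theorem tmul_one_eq_zero_iff_mem_smul_top (I : Ideal R) (m : M) :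
    m ⊗ₜ[R] (1 : R ⧸ I) = 0 ↔ m ∈ I • (⊤ : Submodule R M) := by
  rw [← tensorQuotEquivQuotSMul_symm_mk, LinearEquiv.map_eq_zero_iff,
    Submodule.Quotient.mk_eq_zero]

theorem exists_tmul_one_eq (I : Ideal R) (t : M ⊗[R] (R ⧸ I)) : ∃ m : M, m ⊗ₜ[R] 1 = t := by
  obtain ⟨m, hm⟩ := Submodule.Quotient.mk_surjective _ (tensorQuotEquivQuotSMul M I t)
  exact ⟨m, by rw [← tensorQuotEquivQuotSMul_symm_mk, hm, LinearEquiv.symm_apply_apply]⟩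

theorem ker_le_range_sup_smul_top_inf_ker (I : Ideal R) {f : M →ₗ[R] N} {g : N →ₗ[R] P}
    (hgf : g.comp f = 0)
    (hred : LinearMap.ker (g.rTensor (R ⧸ I)) ≤ LinearMap.range (f.rTensor (R ⧸ I))) :
    LinearMap.ker g ≤ LinearMap.range f ⊔ (I • ⊤ ⊓ LinearMap.ker g) := by
  intro x hx
  have hgfy (y : M) : g (f y) = 0 := LinearMap.congr_fun hgf y
  obtain ⟨t, ht⟩ := hred (show x ⊗ₜ[R] (1 : R ⧸ I) ∈ LinearMap.ker (g.rTensor (R ⧸ I)) by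
    simp [LinearMap.mem_ker.mp hx])
  obtain ⟨y, rfl⟩ := exists_tmul_one_eq I t
  have hxy_smul : x - f y ∈ I • (⊤ : Submodule R N) := by
    rw [← tmul_one_eq_zero_iff_mem_smul_top, sub_tmul, ← LinearMap.rTensor_tmul, ht, sub_self]
  have hxy_ker : x - f y ∈ LinearMap.ker g := by
    simp [LinearMap.mem_ker.mp hx, hgfy]
  rw [← add_sub_cancel (f y) x]
  exact Submodule.add_mem_sup ⟨y, rfl⟩ ⟨hxy_smul, hxy_ker⟩

theorem span_singleton_smul_top_inf_ker_le {ϖ : R} (hϖ : IsSMulRegular P ϖ) (g : N →ₗ[R] P) :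
    Ideal.span {ϖ} • ⊤ ⊓ LinearMap.ker g ≤ Ideal.span {ϖ} • LinearMap.ker g := by
  rintro _ ⟨hx, hgx⟩
  rw [Submodule.ideal_span_singleton_smul] at hx ⊢
  obtain ⟨w, -, rfl⟩ := hx
  refine Submodule.smul_mem_pointwise_smul w ϖ _ ?_
  exact hϖ (by simpa using hgx)

end QuotientReduction

theorem IsDiscreteValuationRing.ker_eq_range_of_rTensor_residueField
    {R M N P : Type*} [CommRing R] [IsDomain R] [IsDiscreteValuationRing R]
    [AddCommGroup M] [Module R M] [AddCommGroup N] [Module R N] [Module.Finite R N]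
    [AddCommGroup P] [Module R P] [Module.IsTorsionFree R P]
    {f : M →ₗ[R] N} {g : N →ₗ[R] P} (hgf : g.comp f = 0)
    (hred : LinearMap.ker (g.rTensor (IsLocalRing.ResidueField R)) ≤
      LinearMap.range (f.rTensor (IsLocalRing.ResidueField R))) :
    LinearMap.ker g = LinearMap.range f := by
  obtain ⟨ϖ, hϖ⟩ := IsDiscreteValuationRing.exists_irreducible R
  refine le_antisymm ?_ (LinearMap.range_le_ker_iff.mpr hgf)
  have hker : LinearMap.ker g ≤
      LinearMap.range f ⊔ IsLocalRing.maximalIdeal R • LinearMap.ker g := by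
    refine (ker_le_range_sup_smul_top_inf_ker _ hgf hred).trans (sup_le_sup_left ?_ _)
    rw [hϖ.maximalIdeal_eq]
    exact span_singleton_smul_top_inf_ker_le (IsSMulRegular.of_ne_zero hϖ.ne_zero) g
  exact Submodule.le_of_le_smul_of_le_jacobson_bot (IsNoetherian.noetherian _)
    (IsLocalRing.maximalIdeal_le_jacobson ⊥) hker

theorem stmt_7_general
    {R : Type*} [CommRing R] [IsDomain R] [IsDiscreteValuationRing R]
    (C : ℤ → Type*) [∀ i, AddCommGroup (C i)] [∀ i, Module R (C i)]
    [∀ i, Module.Free R (C i)] [∀ i, Module.Finite R (C i)]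
    (d : ∀ i : ℤ, C (i + 1) →ₗ[R] C i)
    (hdd : ∀ i : ℤ, (d i).comp (d (i + 1)) = 0)
    (hred : ∀ i : ℤ,
      LinearMap.ker (LinearMap.rTensor (IsLocalRing.ResidueField R) (d i)) =
      LinearMap.range (LinearMap.rTensor (IsLocalRing.ResidueField R) (d (i + 1)))) :
    ∀ i : ℤ, LinearMap.ker (d i) = LinearMap.range (d (i + 1)) := fun i =>
  IsDiscreteValuationRing.ker_eq_range_of_rTensor_residueField (hdd i) (hred i).le

/-- Lemma 6.3 of the paper: a bounded-above complex of finitely generated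
free modules over a discrete valuation ring is exact if its reduction modulo the maximal
ideal is exact. -/
theorem stmt_7
    {R : Type*} [CommRing R] [IsDomain R] [IsDiscreteValuationRing R]
    (C : ℤ → Type*) [∀ i, AddCommGroup (C i)] [∀ i, Module R (C i)]
    [∀ i, Module.Free R (C i)] [∀ i, Module.Finite R (C i)]
    (d : ∀ i : ℤ, C (i + 1) →ₗ[R] C i)
    (hdd : ∀ i : ℤ, (d i).comp (d (i + 1)) = 0)
    (hbdd : ∃ N : ℤ, ∀ i > N, ∀ x : C i, x = 0)
    (hred : ∀ i : ℤ,
      LinearMap.ker (LinearMap.rTensor (IsLocalRing.ResidueField R) (d i)) =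
      LinearMap.range (LinearMap.rTensor (IsLocalRing.ResidueField R) (d (i + 1)))) :
    ∀ i : ℤ, LinearMap.ker (d i) = LinearMap.range (d (i + 1)) :=
  stmt_7_general C d hdd hred
end

section
/- Every group homomorphism f from N to the additive group of 𝔽_p is an 𝔽_p-linear combination of the two homomorphisms α₁₂ : a ↦ π(a₁₂) and α₂₃ : a ↦ π(a₂₃); that is, there exist c₁, c₂ ∈ 𝔽_p such that f(a) = c₁·π(a₁₂) + c₂·π(a₂₃) for all a ∈ N. -/
/-!
Write `heis x y z` for the element of `N` with `a₁₂ = x`, `a₂₃ = y`, `a₁₃ = z`. A homomorphism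
`f : N → 𝔽_p` vanishes on the centre: `heis 0 0 z` is the discrepancy between
`heis 1 0 0 * heis 0 z 0 = heis 1 z z` and `heis 0 z 0 * heis 1 0 0 = heis 1 z 0`, whose images
under `f` agree. Hence `f (heis x y z) = f (heis x 0 0) + f (heis 0 y 0)`, a sum of two additive
maps `ℤ_p → 𝔽_p`. Such a map kills `pℤ_p`, since its target is killed by `p`, so it factors
through `ℤ_p/pℤ_p = 𝔽_p` and is multiplication by a constant.
-/

/-- `A` is an upper triangular unipotent 3×3 matrix over `ℤ_[p]`: diagonal entries `1`,
entries below the diagonal `0`.  The group `N` of the paper is the set of such matrices. -/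
def IsUnipotentUpperTriangular {p : ℕ} [Fact p.Prime]
    (A : Matrix (Fin 3) (Fin 3) ℤ_[p]) : Prop :=
  (∀ i : Fin 3, A i i = 1) ∧ ∀ i j : Fin 3, j < i → A i j = 0

namespace PadicInt

variable {p : ℕ} [Fact p.Prime]

theorem addMonoidHom_apply_eq_toZMod_smul {M : Type*} [AddCommGroup M] [Module (ZMod p) M]
    (g : ℤ_[p] →+ M) (x : ℤ_[p]) : g x = toZMod x • g 1 := by
  obtain ⟨y, hy⟩ : (p : ℤ_[p]) ∣ x - ((toZMod x).val : ℤ_[p]) := by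
    rw [← Ideal.mem_span_singleton, ← maximalIdeal_eq_span_p, ZMod.natCast_val]
    exact toZMod_spec x
  have hx : x = ((toZMod x).val : ℤ_[p]) + p * y := by rw [← hy]; ring
  have hpy : g (p * y) = 0 := by
    rw [← nsmul_eq_mul, map_nsmul, ← Nat.cast_smul_eq_nsmul (ZMod p), ZMod.natCast_self,
      zero_smul]
  conv_lhs => rw [hx, map_add, hpy, add_zero, ← nsmul_one, map_nsmul]
  rw [← Nat.cast_smul_eq_nsmul (ZMod p), ZMod.natCast_val, ZMod.cast_id', id]

end PadicInt

section Heisenberg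

variable {R : Type*} [Ring R]

def heis (x y z : R) : Matrix (Fin 3) (Fin 3) R :=
  !![1, x, z; 0, 1, y; 0, 0, 1]

theorem heis_mul (x y z x' y' z' : R) :
    heis x y z * heis x' y' z' = heis (x + x') (y + y') (z + z' + x * y') := by
  ext i j
  fin_cases i <;> fin_cases j <;> simp [heis, Matrix.mul_apply, Fin.sum_univ_three] <;> abel

end Heisenberg

variable {p : ℕ} [Fact p.Prime]

theorem isUnipotentUpperTriangular_heis (x y z : ℤ_[p]) :
    IsUnipotentUpperTriangular (heis x y z) := by
  refine ⟨fun i => ?_, fun i j hij => ?_⟩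
  · fin_cases i <;> rfl
  · fin_cases i <;> fin_cases j <;> first | rfl | exact absurd hij (by decide)

theorem IsUnipotentUpperTriangular.eq_heis {A : Matrix (Fin 3) (Fin 3) ℤ_[p]}
    (hA : IsUnipotentUpperTriangular A) : A = heis (A 0 1) (A 1 2) (A 0 2) := by
  obtain ⟨hdiag, hlower⟩ := hA
  ext i j
  fin_cases i <;> fin_cases j
  all_goals first
    | exact hdiag _
    | exact hlower _ _ (by decide)
    | rfl

section Homomorphism

variable (f : Matrix (Fin 3) (Fin 3) ℤ_[p] → ZMod p)

theorem map_heis_mul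
    (hf : ∀ A B : Matrix (Fin 3) (Fin 3) ℤ_[p],
      IsUnipotentUpperTriangular A → IsUnipotentUpperTriangular B → f (A * B) = f A + f B)
    (x y z x' y' z' : ℤ_[p]) :
    f (heis x y z * heis x' y' z') = f (heis x y z) + f (heis x' y' z') :=
  hf _ _ (isUnipotentUpperTriangular_heis x y z) (isUnipotentUpperTriangular_heis x' y' z')

variable {f}
  (hf : ∀ x y z x' y' z' : ℤ_[p],
    f (heis x y z * heis x' y' z') = f (heis x y z) + f (heis x' y' z'))
include hf

theorem map_heis_center_eq_zero (z : ℤ_[p]) : f (heis 0 0 z) = 0 := by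
  have h₁ : heis 1 z z = heis 1 z 0 * heis 0 0 z := by rw [heis_mul]; simp
  have h₂ : heis 1 z z = heis 1 0 0 * heis 0 z 0 := by rw [heis_mul]; simp
  have h₃ : heis 1 z 0 = heis 0 z 0 * heis 1 0 0 := by rw [heis_mul]; simp
  have h : f (heis 1 z 0) + f (heis 0 0 z) = f (heis 1 z 0) := by
    rw [← hf, ← h₁, h₂, hf, h₃, hf, add_comm]
  exact add_eq_left.mp h

theorem map_heis_eq_add (x y z : ℤ_[p]) :
    f (heis x y z) = f (heis x 0 0) + f (heis 0 y 0) := by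
  have h₁ : heis x y z = heis x y 0 * heis 0 0 z := by rw [heis_mul]; simp
  have h₂ : heis x y 0 = heis 0 y 0 * heis x 0 0 := by rw [heis_mul]; simp
  rw [h₁, hf, map_heis_center_eq_zero hf, add_zero, h₂, hf, add_comm]

theorem map_heis_x_zero_zero (x : ℤ_[p]) :
    f (heis x 0 0) = PadicInt.toZMod x * f (heis 1 0 0) :=
  PadicInt.addMonoidHom_apply_eq_toZMod_smul
    (AddMonoidHom.mk' (fun x => f (heis x 0 0)) fun a b => by rw [← hf, heis_mul]; simp) x

theorem map_heis_zero_y_zero (y : ℤ_[p]) :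
    f (heis 0 y 0) = PadicInt.toZMod y * f (heis 0 1 0) :=
  PadicInt.addMonoidHom_apply_eq_toZMod_smul
    (AddMonoidHom.mk' (fun y => f (heis 0 y 0)) fun a b => by rw [← hf, heis_mul]; simp) y

end Homomorphism

/-- every group homomorphism from `N` to the additive group `𝔽_p` is an
`𝔽_p`-linear combination of `α₁₂ : a ↦ π(a₁₂)` and `α₂₃ : a ↦ π(a₂₃)`. -/
theorem stmt_11 {p : ℕ} [Fact p.Prime]
    (f : Matrix (Fin 3) (Fin 3) ℤ_[p] → ZMod p)
    (hf : ∀ A B : Matrix (Fin 3) (Fin 3) ℤ_[p],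
      IsUnipotentUpperTriangular A → IsUnipotentUpperTriangular B →
      f (A * B) = f A + f B) :
    ∃ c₁ c₂ : ZMod p, ∀ A : Matrix (Fin 3) (Fin 3) ℤ_[p],
      IsUnipotentUpperTriangular A →
      f A = c₁ * PadicInt.toZMod (A 0 1) + c₂ * PadicInt.toZMod (A 1 2) := by
  have hf' := map_heis_mul f hf
  refine ⟨f (heis 1 0 0), f (heis 0 1 0), fun A hA => ?_⟩
  conv_lhs =>
    rw [hA.eq_heis, map_heis_eq_add hf', map_heis_x_zero_zero hf', map_heis_zero_y_zero hf']
  ring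
end

section
/- The function γ₁ : N × N → 𝔽ₚ is a normalized 2-cocycle on N with values in 𝔽ₚ (for the trivial N-action): γ₁(a, 1) = γ₁(1, a) = 0 for every a ∈ N, and γ₁(b, c) − γ₁(a·b, c) + γ₁(a, b·c) − γ₁(a, b) = 0 for all a, b, c ∈ N. -/
/-- The 2-cochain `γ₁(a, b) = π(a₁₃·b₂₃ + a₁₂·q(b₂₃))` of the paper, where `q` is the
"halving" function with `2·q(x) = x² − x`. -/
noncomputable def gammaOne {p : ℕ} [Fact p.Prime] (q : ℤ_[p] → ℤ_[p])
    (A B : Matrix (Fin 3) (Fin 3) ℤ_[p]) : ZMod p :=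
  PadicInt.toZMod (A 0 2 * B 1 2 + A 0 1 * q (B 1 2))

/-!
Since `2 q(x) = x² − x` and `2` is not a zero divisor, `q(0) = 0` and `q` is additive up to the
correction term `q(y + z) = q(y) + q(z) + y z`. Together with the multiplication rule of `N`, the
coboundary of `γ₁` then reduces in `ℤ_[p]` to `a₁₂ (q(b₂₃ + c₂₃) − q(b₂₃) − q(c₂₃) − b₂₃ c₂₃) = 0`.
-/

section HalfSquare

variable {R : Type*} [CommRing R] [IsDomain R] [CharZero R] {q : R → R}

theorem halfSquare_zero (hq : ∀ x, 2 * q x = x ^ 2 - x) : q 0 = 0 :=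
  mul_left_cancel₀ two_ne_zero (by rw [hq]; ring)

theorem halfSquare_add (hq : ∀ x, 2 * q x = x ^ 2 - x) (y z : R) :
    q (y + z) = q y + q z + y * z :=
  mul_left_cancel₀ two_ne_zero (by rw [mul_add, mul_add, hq, hq, hq]; ring)

end HalfSquare

namespace IsUnipotentUpperTriangular

variable {p : ℕ} [Fact p.Prime] {A B : Matrix (Fin 3) (Fin 3) ℤ_[p]}

theorem mul_apply_zero_one (hA : IsUnipotentUpperTriangular A)
    (hB : IsUnipotentUpperTriangular B) : (A * B) 0 1 = A 0 1 + B 0 1 := by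
  rw [Matrix.mul_apply, Fin.sum_univ_three, hA.1 0, hB.1 1, hB.2 2 1 (by decide)]
  ring

theorem mul_apply_one_two (hA : IsUnipotentUpperTriangular A)
    (hB : IsUnipotentUpperTriangular B) : (A * B) 1 2 = A 1 2 + B 1 2 := by
  rw [Matrix.mul_apply, Fin.sum_univ_three, hA.1 1, hB.1 2, hA.2 1 0 (by decide)]
  ring

theorem mul_apply_zero_two (hA : IsUnipotentUpperTriangular A)
    (hB : IsUnipotentUpperTriangular B) :
    (A * B) 0 2 = A 0 2 + B 0 2 + A 0 1 * B 1 2 := by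
  rw [Matrix.mul_apply, Fin.sum_univ_three, hA.1 0, hB.1 2]
  ring

end IsUnipotentUpperTriangular

section GammaOne

variable {p : ℕ} [Fact p.Prime] {q : ℤ_[p] → ℤ_[p]}

theorem gammaOne_one_right (hq : ∀ x : ℤ_[p], 2 * q x = x ^ 2 - x)
    (A : Matrix (Fin 3) (Fin 3) ℤ_[p]) : gammaOne q A 1 = 0 := by
  simp [gammaOne, Matrix.one_apply_ne (show (1 : Fin 3) ≠ 2 by decide), halfSquare_zero hq]

theorem gammaOne_one_left (A : Matrix (Fin 3) (Fin 3) ℤ_[p]) : gammaOne q 1 A = 0 := by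
  simp [gammaOne, Matrix.one_apply_ne (show (0 : Fin 3) ≠ 1 by decide),
    Matrix.one_apply_ne (show (0 : Fin 3) ≠ 2 by decide)]

theorem gammaOne_coboundary_eq_zero (hq : ∀ x : ℤ_[p], 2 * q x = x ^ 2 - x)
    {A B C : Matrix (Fin 3) (Fin 3) ℤ_[p]} (hA : IsUnipotentUpperTriangular A)
    (hB : IsUnipotentUpperTriangular B) (hC : IsUnipotentUpperTriangular C) :
    gammaOne q B C - gammaOne q (A * B) C + gammaOne q A (B * C) - gammaOne q A B = 0 := by
  simp only [gammaOne, hA.mul_apply_zero_one hB, hA.mul_apply_zero_two hB,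
    hB.mul_apply_one_two hC, ← map_sub, ← map_add]
  rw [← map_zero PadicInt.toZMod]
  congr 1
  linear_combination A 0 1 * halfSquare_add hq (B 1 2) (C 1 2)

end GammaOne

/-- `γ₁` is a normalized 2-cocycle on `N` with values in `𝔽_p` (trivial
action). -/
theorem stmt_12 {p : ℕ} [Fact p.Prime]
    (q : ℤ_[p] → ℤ_[p]) (hq : ∀ x : ℤ_[p], 2 * q x = x ^ 2 - x) :
    (∀ A : Matrix (Fin 3) (Fin 3) ℤ_[p], IsUnipotentUpperTriangular A →
      gammaOne q A 1 = 0 ∧ gammaOne q 1 A = 0) ∧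
    (∀ A B C : Matrix (Fin 3) (Fin 3) ℤ_[p],
      IsUnipotentUpperTriangular A → IsUnipotentUpperTriangular B →
      IsUnipotentUpperTriangular C →
      gammaOne q B C - gammaOne q (A * B) C + gammaOne q A (B * C)
        - gammaOne q A B = 0) :=
  ⟨fun A _ => ⟨gammaOne_one_right hq A, gammaOne_one_left A⟩,
    fun _ _ _ hA hB hC => gammaOne_coboundary_eq_zero hq hA hB hC⟩
end

section
/- For every pair (c₁, c₂) ∈ 𝔽ₚ × 𝔽ₚ with (c₁, c₂) ≠ (0, 0), the 2-cocycle c₁·γ₁ + c₂·γ₂ on N is not a coboundary: there is no function b : N → 𝔽ₚ such that c₁·γ₁(i, j) + c₂·γ₂(i, j) = b(j) − b(i·j) + b(i) for all i, j ∈ N. (Hence the classes of γ₁ and γ₂ are linearly independent in H²(N, 𝔽ₚ).) -/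
/-- The 2-cochain `γ₂(a, b) = π(a₁₂·b₁₃ + q(a₁₂)·b₂₃)` of the paper. -/
noncomputable def gammaTwo {p : ℕ} [Fact p.Prime] (q : ℤ_[p] → ℤ_[p])
    (A B : Matrix (Fin 3) (Fin 3) ℤ_[p]) : ZMod p :=
  PadicInt.toZMod (A 0 1 * B 0 2 + q (A 0 1) * B 1 2)

/-! A coboundary `δb(A, B) = b B - b (A * B) + b A` takes the same value at `(A, B)` and `(B, A)`
whenever `A` and `B` commute. The elementary matrix `E₁₃` is central in `N`, and the antisymmetric
parts of `γ₁` and `γ₂` at the commuting pairs `(E₁₃, E₂₃)` and `(E₁₂, E₁₃)` are `(1, 0)` and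
`(0, 1)`; so `c₁ γ₁ + c₂ γ₂` can only be a coboundary if `c₁ = c₂ = 0`. -/

theorem Commute.cochain_swap_of_eq_coboundary {G R : Type*} [Mul G] [AddCommGroup R]
    {f : G → G → R} {b : G → R} {A B : G} (h : Commute A B)
    (hAB : f A B = b B - b (A * B) + b A) (hBA : f B A = b A - b (B * A) + b B) :
    f A B = f B A := by
  rw [hAB, hBA, h.eq]; abel

/-- The matrix with `a₁₂ = x`, `a₁₃ = y`, `a₂₃ = z` (indices are 0-based in Lean). -/
def unitriangular {R : Type*} [Zero R] [One R] (x y z : R) : Matrix (Fin 3) (Fin 3) R :=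
  !![1, x, y; 0, 1, z; 0, 0, 1]

theorem isUnipotentUpperTriangular_unitriangular {p : ℕ} [Fact p.Prime] (x y z : ℤ_[p]) :
    IsUnipotentUpperTriangular (unitriangular x y z) := by
  constructor
  · intro i; fin_cases i <;> rfl
  · intro i j h; fin_cases i <;> fin_cases j <;> first | rfl | exact absurd h (by decide)

theorem commute_unitriangular_zero_zero {R : Type*} [CommRing R] (c x y z : R) :
    Commute (unitriangular 0 c 0) (unitriangular x y z) := by
  ext i j; fin_cases i <;> fin_cases j <;> simp [unitriangular, add_comm]

/-- no nontrivial `𝔽_p`-linear combination of `γ₁` and `γ₂` is a coboundary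
on `N`, i.e. the classes of `γ₁` and `γ₂` are linearly independent in `H²(N, 𝔽_p)`. -/
theorem stmt_14 {p : ℕ} [Fact p.Prime]
    (q : ℤ_[p] → ℤ_[p]) (hq : ∀ x : ℤ_[p], 2 * q x = x ^ 2 - x)
    (c₁ c₂ : ZMod p) (hc : (c₁, c₂) ≠ (0, 0)) :
    ¬ ∃ b : Matrix (Fin 3) (Fin 3) ℤ_[p] → ZMod p,
      ∀ A B : Matrix (Fin 3) (Fin 3) ℤ_[p],
        IsUnipotentUpperTriangular A → IsUnipotentUpperTriangular B →
        c₁ * gammaOne q A B + c₂ * gammaTwo q A B = b B - b (A * B) + b A := by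
  rintro ⟨b, hb⟩
  have hq₀ : q 0 = 0 := by simpa using hq 0
  set E₁₃ : Matrix (Fin 3) (Fin 3) ℤ_[p] := unitriangular 0 1 0
  have swap_central : ∀ x y z : ℤ_[p],
      c₁ * gammaOne q E₁₃ (unitriangular x y z) + c₂ * gammaTwo q E₁₃ (unitriangular x y z)
        = c₁ * gammaOne q (unitriangular x y z) E₁₃
          + c₂ * gammaTwo q (unitriangular x y z) E₁₃ := fun x y z =>
    (commute_unitriangular_zero_zero 1 x y z).cochain_swap_of_eq_coboundary
      (f := fun A B => c₁ * gammaOne q A B + c₂ * gammaTwo q A B)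
      (hb _ _ (isUnipotentUpperTriangular_unitriangular _ _ _)
        (isUnipotentUpperTriangular_unitriangular _ _ _))
      (hb _ _ (isUnipotentUpperTriangular_unitriangular _ _ _)
        (isUnipotentUpperTriangular_unitriangular _ _ _))
  have hc₁ : c₁ = 0 := by
    simpa [E₁₃, gammaOne, gammaTwo, unitriangular, hq₀] using swap_central 0 0 1
  have hc₂ : c₂ = 0 := by
    simpa [E₁₃, gammaOne, gammaTwo, unitriangular, hq₀] using (swap_central 1 0 0).symm
  exact hc (by rw [hc₁, hc₂])
end

section
/- For any two group homomorphisms φ, ψ from N to the additive group of 𝔽ₚ, the 2-cocycle (a, a') ↦ φ(a)·ψ(a') on N is a coboundary: there exists a function b : N → 𝔽ₚ with b(1) = 0 such that φ(a)·ψ(a') = b(a') − b(a·a') + b(a) for all a, a' ∈ N. (This expresses that the cup product H¹(N, 𝔽ₚ) × H¹(N, 𝔽ₚ) → H²(N, 𝔽ₚ) is the zero map.) -/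
/-!
Every homomorphism `N → 𝔽ₚ` kills the centre `{a₁₂ = a₂₃ = 0}` and factors through the
abelianisation `(a₁₂, a₂₃) ↦ (π a₁₂, π a₂₃)`, so the cup product of two of them is a bilinear
form in `π a₁₂, π a₂₃` of the first and second argument. Each of its four monomials is a
coboundary: `a₁₂ a'₁₂` of `-π (a₁₂ choose 2)` (Chu–Vandermonde), `a₂₃ a'₂₃` likewise,
`a₁₂ a'₂₃` of `-π a₁₃` (the group law), and `a₂₃ a'₁₂` of `π a₁₃ - π a₁₂ π a₂₃`.
-/

open PadicInt

section Unitriangular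

variable {R : Type*} [Semiring R]

def upperUnitri (a b c : R) : Matrix (Fin 3) (Fin 3) R :=
  !![1, a, c; 0, 1, b; 0, 0, 1]

@[simp] lemma upperUnitri_apply_zero_one (a b c : R) : upperUnitri a b c 0 1 = a := rfl
@[simp] lemma upperUnitri_apply_one_two (a b c : R) : upperUnitri a b c 1 2 = b := rfl
@[simp] lemma upperUnitri_apply_zero_two (a b c : R) : upperUnitri a b c 0 2 = c := rfl

lemma upperUnitri_mul (a b c a' b' c' : R) :
    upperUnitri a b c * upperUnitri a' b' c' =
      upperUnitri (a + a') (b + b') (c + c' + a * b') := by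
  ext i j
  fin_cases i <;> fin_cases j <;>
    simp [upperUnitri, Matrix.mul_apply, Fin.sum_univ_three, add_assoc, add_comm]

lemma upperUnitri_zero : upperUnitri (0 : R) 0 0 = 1 := by
  ext i j
  fin_cases i <;> fin_cases j <;> rfl

end Unitriangular

lemma Ring.choose_two_add {R : Type*} [CommRing R] [BinomialRing R] (r s : R) :
    Ring.choose (r + s) 2 = Ring.choose r 2 + Ring.choose s 2 + r * s := by
  rw [Ring.add_choose_eq 2 (Commute.all r s)]
  simp [Finset.Nat.antidiagonal_succ]
  ring

lemma AddMonoidHom.apply_eq_toZMod_mul {p : ℕ} [Fact p.Prime] (f : ℤ_[p] →+ ZMod p)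
    (x : ℤ_[p]) :
    f x = toZMod x * f 1 := by
  obtain ⟨y, hy⟩ : (p : ℤ_[p]) ∣ x - x.zmodRepr := by
    rw [← Ideal.mem_span_singleton, ← maximalIdeal_eq_span_p]
    exact sub_zmodRepr_mem x
  have hx : x = (x.zmodRepr : ℕ) • (1 : ℤ_[p]) + p • y := by
    rw [nsmul_one, nsmul_eq_mul, ← hy, add_sub_cancel]
  have hπ : toZMod x = x.zmodRepr := by
    rw [← val_toZMod_eq_zmodRepr, ZMod.natCast_zmod_val]
  rw [hx, map_add, map_nsmul, map_nsmul, nsmul_eq_mul, nsmul_eq_mul, ZMod.natCast_self,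
    zero_mul, add_zero, ← hx, hπ]

section Unipotent

variable {p : ℕ} [Fact p.Prime]

lemma isUnipotentUpperTriangular_upperUnitri (a b c : ℤ_[p]) :
    IsUnipotentUpperTriangular (upperUnitri a b c) := by
  refine ⟨fun i => ?_, fun i j hji => ?_⟩
  · fin_cases i <;> rfl
  · fin_cases i <;> fin_cases j <;> first | rfl | exact absurd hji (by decide)

lemma IsUnipotentUpperTriangular.eq_upperUnitri {A : Matrix (Fin 3) (Fin 3) ℤ_[p]}
    (hA : IsUnipotentUpperTriangular A) : A = upperUnitri (A 0 1) (A 1 2) (A 0 2) := by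
  ext i j
  fin_cases i <;> fin_cases j <;> first
    | rfl | exact hA.1 _ | exact hA.2 _ _ (by decide)

def IsHomOnUnipotent {G : Type*} [Add G] (φ : Matrix (Fin 3) (Fin 3) ℤ_[p] → G) : Prop :=
  ∀ A B, IsUnipotentUpperTriangular A → IsUnipotentUpperTriangular B → φ (A * B) = φ A + φ B

namespace IsHomOnUnipotent

variable {G : Type*} [AddCommGroup G] {φ : Matrix (Fin 3) (Fin 3) ℤ_[p] → G}

lemma map_upperUnitri_mul (hφ : IsHomOnUnipotent φ) (a b c a' b' c' : ℤ_[p]) :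
    φ (upperUnitri (a + a') (b + b') (c + c' + a * b')) =
      φ (upperUnitri a b c) + φ (upperUnitri a' b' c') := by
  rw [← upperUnitri_mul]
  exact hφ _ _ (isUnipotentUpperTriangular_upperUnitri _ _ _)
    (isUnipotentUpperTriangular_upperUnitri _ _ _)

/-- The centre consists of commutators:
`[upperUnitri c 0 0, upperUnitri 0 1 0] = upperUnitri 0 0 c`. -/
lemma map_upperUnitri_center (hφ : IsHomOnUnipotent φ) (c : ℤ_[p]) :
    φ (upperUnitri 0 0 c) = 0 := by
  have h₁ := hφ.map_upperUnitri_mul c 0 0 0 1 0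
  have h₂ := hφ.map_upperUnitri_mul 0 1 0 c 0 0
  have h₃ := hφ.map_upperUnitri_mul c 1 0 0 0 c
  simp only [add_zero, zero_add, mul_one, mul_zero] at h₁ h₂ h₃
  rw [h₃, h₂] at h₁
  simpa [add_comm] using h₁

lemma map_upperUnitri (hφ : IsHomOnUnipotent φ) (a b c : ℤ_[p]) :
    φ (upperUnitri a b c) = φ (upperUnitri a 0 0) + φ (upperUnitri 0 b 0) := by
  have h₁ := hφ.map_upperUnitri_mul 0 b 0 a 0 0
  have h₂ := hφ.map_upperUnitri_mul a b 0 0 0 c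
  simp only [add_zero, zero_add, mul_zero] at h₁ h₂
  rw [h₂, hφ.map_upperUnitri_center, add_zero, h₁, add_comm]

end IsHomOnUnipotent

lemma IsHomOnUnipotent.map_upperUnitri_eq {φ : Matrix (Fin 3) (Fin 3) ℤ_[p] → ZMod p}
    (hφ : IsHomOnUnipotent φ) (a b c : ℤ_[p]) :
    φ (upperUnitri a b c) =
      toZMod a * φ (upperUnitri 1 0 0) + toZMod b * φ (upperUnitri 0 1 0) := by
  let f₁ : ℤ_[p] →+ ZMod p := AddMonoidHom.mk' (fun t => φ (upperUnitri t 0 0))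
    fun s t => by simpa using hφ.map_upperUnitri_mul s 0 0 t 0 0
  let f₂ : ℤ_[p] →+ ZMod p := AddMonoidHom.mk' (fun t => φ (upperUnitri 0 t 0))
    fun s t => by simpa using hφ.map_upperUnitri_mul 0 s 0 0 t 0
  rw [hφ.map_upperUnitri, show φ (upperUnitri a 0 0) = f₁ a from rfl,
    show φ (upperUnitri 0 b 0) = f₂ b from rfl, f₁.apply_eq_toZMod_mul, f₂.apply_eq_toZMod_mul]
  rfl

end Unipotent

/-- the cup product of any two homomorphisms `N → 𝔽_p` is a coboundary,
i.e. the cup product `H¹(N, 𝔽_p) × H¹(N, 𝔽_p) → H²(N, 𝔽_p)` is the zero map. -/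
theorem stmt_15 {p : ℕ} [Fact p.Prime]
    (φ ψ : Matrix (Fin 3) (Fin 3) ℤ_[p] → ZMod p)
    (hφ : ∀ A B : Matrix (Fin 3) (Fin 3) ℤ_[p],
      IsUnipotentUpperTriangular A → IsUnipotentUpperTriangular B →
      φ (A * B) = φ A + φ B)
    (hψ : ∀ A B : Matrix (Fin 3) (Fin 3) ℤ_[p],
      IsUnipotentUpperTriangular A → IsUnipotentUpperTriangular B →
      ψ (A * B) = ψ A + ψ B) :
    ∃ b : Matrix (Fin 3) (Fin 3) ℤ_[p] → ZMod p, b 1 = 0 ∧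
      ∀ A A' : Matrix (Fin 3) (Fin 3) ℤ_[p],
        IsUnipotentUpperTriangular A → IsUnipotentUpperTriangular A' →
        φ A * ψ A' = b A' - b (A * A') + b A := by
  set α := φ (upperUnitri 1 0 0)
  set β := φ (upperUnitri 0 1 0)
  set γ := ψ (upperUnitri 1 0 0)
  set δ := ψ (upperUnitri 0 1 0)
  refine ⟨fun A => -(α * γ) * toZMod (Ring.choose (A 0 1) 2)
      - β * δ * toZMod (Ring.choose (A 1 2) 2) - (α * δ - β * γ) * toZMod (A 0 2)
      - β * γ * (toZMod (A 0 1) * toZMod (A 1 2)), ?_, ?_⟩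
  · rw [← upperUnitri_zero]
    simp
  · intro A A' hA hA'
    rw [hA.eq_upperUnitri, hA'.eq_upperUnitri, upperUnitri_mul,
      IsHomOnUnipotent.map_upperUnitri_eq hφ, IsHomOnUnipotent.map_upperUnitri_eq hψ]
    simp only [upperUnitri_apply_zero_one, upperUnitri_apply_one_two,
      upperUnitri_apply_zero_two, Ring.choose_two_add, map_add, map_mul]
    ring
end
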